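/- With the notation of the context (tangent surface of the perturbed helix α(t) = (t, t²+t⁴, t³), the maps T_s, and the averaged measure ν built from a measure μ with Fourier decay exponent β/2), there is a constant C' > 0 such that |ν̂(ρ e₃)| ≤ C' ρ^{−β/2} for all ρ > 0, where e₃ = (0,0,1). In fact one may take C' = C‖ψ‖_{L¹}. -/

import Mathlib

/-! Testing `ν` against the character `x ↦ e^{−2πi x·ρe₃}` gives
`ν̂(ρe₃) = ∫ (∫ e^{−2πi ρ (Φ − α(s))·n(s)} dλ) ψ(s) ds`. The inner integral is a unimodular phase
times `μ̂(ρ n(s))`, and `|n(s)| ≥ n(s)₃ = 6s² + 1 ≥ 1`, so it is at most `C ρ^{−β/2}`;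
integrating against `ψ ≥ 0` gives the bound. -/

open MeasureTheory Real Set

/-- The Fourier transform of a measure on `ℝ^n`:  `μ̂(ξ) = ∫ e^{−2πi x·ξ} dμ(x)`. -/
noncomputable def mft {n : ℕ} (μ : Measure (EuclideanSpace ℝ (Fin n)))
    (ξ : EuclideanSpace ℝ (Fin n)) : ℂ :=
  ∫ x, Complex.exp (((-2 * Real.pi * inner ℝ x ξ : ℝ) : ℂ) * Complex.I) ∂μ

/-- A point of `ℝ³` from three coordinates. -/
noncomputable def pt3 (x y z : ℝ) : EuclideanSpace ℝ (Fin 3) :=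
  (EuclideanSpace.equiv (Fin 3) ℝ).symm ![x, y, z]

/-- The perturbed helix `α(t) = (t, t²+t⁴, t³)`. -/
noncomputable def pAlpha (t : ℝ) : EuclideanSpace ℝ (Fin 3) :=
  pt3 t (t ^ 2 + t ^ 4) (t ^ 3)

/-- The normal vector `n(s) = (−3s²(2s²−1), −3s, 6s²+1)`. -/
noncomputable def pNormal (s : ℝ) : EuclideanSpace ℝ (Fin 3) :=
  pt3 (-3 * s ^ 2 * (2 * s ^ 2 - 1)) (-3 * s) (6 * s ^ 2 + 1)

/-- The affine map `T_s(x₁,x₂,x₃) = (x₁, x₂, x·n(s) − α(s)·n(s))`. -/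
noncomputable def pT (s : ℝ) (x : EuclideanSpace ℝ (Fin 3)) : EuclideanSpace ℝ (Fin 3) :=
  pt3 (x 0) (x 1) ((inner ℝ x (pNormal s) : ℝ) - (inner ℝ (pAlpha s) (pNormal s) : ℝ))


@[fun_prop]
lemma Continuous.pt3 {X : Type*} [TopologicalSpace X] {f g h : X → ℝ} (hf : Continuous f)
    (hg : Continuous g) (hh : Continuous h) : Continuous fun p => pt3 (f p) (g p) (h p) :=
  (EuclideanSpace.equiv (Fin 3) ℝ).symm.continuous.comp <| continuous_pi fun i => by
    fin_cases i <;> simpa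

lemma pt3_apply_two (x y z : ℝ) : pt3 x y z 2 = z := rfl

lemma one_le_norm_pNormal (s : ℝ) : 1 ≤ ‖pNormal s‖ := by
  have h := abs_real_inner_le_norm (pNormal s) (EuclideanSpace.single (2 : Fin 3) 1)
  rw [EuclideanSpace.inner_single_right, PiLp.norm_single] at h
  simp only [pNormal, pt3_apply_two, one_mul, conj_trivial, norm_one, mul_one] at h
  calc 1 ≤ 6 * s ^ 2 + 1 := by nlinarith [sq_nonneg s]
    _ ≤ ‖pNormal s‖ := (le_abs_self _).trans h

lemma inner_pT_smul_single_two (s ρ : ℝ) (x : EuclideanSpace ℝ (Fin 3)) :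
    inner ℝ (pT s x) (ρ • EuclideanSpace.single (2 : Fin 3) 1) =
      inner ℝ x (ρ • pNormal s) - ρ * inner ℝ (pAlpha s) (pNormal s) := by
  rw [real_inner_smul_right, real_inner_smul_right, EuclideanSpace.inner_single_right]
  simp only [pT, pt3_apply_two, one_mul, conj_trivial]
  ring

section Fourier

variable {n : ℕ}

@[fun_prop]
lemma continuous_exp_inner (ξ : EuclideanSpace ℝ (Fin n)) :
    Continuous fun x : EuclideanSpace ℝ (Fin n) =>
      Complex.exp (((-2 * π * inner ℝ x ξ : ℝ) : ℂ) * Complex.I) := by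
  fun_prop

lemma norm_integral_exp_inner_sub_eq_norm_mft {X : Type*} [MeasurableSpace X] (lam : Measure X)
    {g : X → EuclideanSpace ℝ (Fin n)} (hg : Measurable g) (ξ : EuclideanSpace ℝ (Fin n))
    (c : ℝ) :
    ‖∫ p, Complex.exp (((-2 * π * (inner ℝ (g p) ξ - c) : ℝ) : ℂ) * Complex.I) ∂lam‖ =
      ‖mft (lam.map g) ξ‖ := by
  have hsplit : ∀ p, Complex.exp (((-2 * π * (inner ℝ (g p) ξ - c) : ℝ) : ℂ) * Complex.I) =
      Complex.exp (((2 * π * c : ℝ) : ℂ) * Complex.I) *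
        Complex.exp (((-2 * π * inner ℝ (g p) ξ : ℝ) : ℂ) * Complex.I) := fun p => by
    rw [← Complex.exp_add]
    push_cast
    ring_nf
  simp_rw [hsplit]
  rw [integral_const_mul, norm_mul, Complex.norm_exp_ofReal_mul_I, one_mul, mft,
    integral_map hg.aemeasurable (continuous_exp_inner ξ).aestronglyMeasurable]

lemma norm_mft_le_rpow_of_le_norm {μ : Measure (EuclideanSpace ℝ (Fin n))} {C γ ρ : ℝ}
    (hC : 0 ≤ C) (hγ : 0 ≤ γ) (hρ : 0 < ρ)
    (hdecay : ∀ ξ, ξ ≠ 0 → ‖mft μ ξ‖ ≤ C * ‖ξ‖ ^ (-γ)) {ξ : EuclideanSpace ℝ (Fin n)}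
    (hξ : ρ ≤ ‖ξ‖) : ‖mft μ ξ‖ ≤ C * ρ ^ (-γ) := by
  have hξ0 : ξ ≠ 0 := norm_pos_iff.mp (hρ.trans_le hξ)
  calc ‖mft μ ξ‖ ≤ C * ‖ξ‖ ^ (-γ) := hdecay ξ hξ0
    _ ≤ C * ρ ^ (-γ) :=
      mul_le_mul_of_nonneg_left (Real.rpow_le_rpow_of_nonpos hρ hξ (neg_nonpos.mpr hγ)) hC

end Fourier

lemma norm_integral_mul_ofReal_le {F : ℝ → ℂ} {ψ : ℝ → ℝ} {M : ℝ} (hψ : Integrable ψ)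
    (hψnn : ∀ s, 0 ≤ ψ s) (hF : ∀ s, ‖F s‖ ≤ M) :
    ‖∫ s, F s * (ψ s : ℂ)‖ ≤ M * ∫ s, ψ s := by
  rw [← integral_const_mul]
  refine norm_integral_le_of_norm_le (hψ.const_mul M) (Filter.Eventually.of_forall fun s => ?_)
  rw [norm_mul, Complex.norm_real, Real.norm_of_nonneg (hψnn s)]
  exact mul_le_mul_of_nonneg_right (hF s) (hψnn s)

theorem statement7 (Φ : ℝ → ℝ → EuclideanSpace ℝ (Fin 3))
    (hΦ : ∀ t v, Φ t v =
      pt3 (t + v) (t ^ 2 + t ^ 4 + v * (2 * t + 4 * t ^ 3)) (t ^ 3 + v * (3 * t ^ 2)))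
    (lam : Measure (ℝ × ℝ))
    (C β : ℝ) (hC : 0 < C) (hβ : 0 < β)
    (hdecay : ∀ ξ : EuclideanSpace ℝ (Fin 3), ξ ≠ 0 →
      ‖mft (lam.map fun p : ℝ × ℝ => Φ p.1 p.2) ξ‖ ≤ C * ‖ξ‖ ^ (-(β / 2)))
    (ψ : ℝ → ℝ) (hψsm : ContDiff ℝ (⊤ : ℕ∞) ψ) (hψcs : HasCompactSupport ψ)
    (hψnn : ∀ s, 0 ≤ ψ s)
    (ν : Measure (EuclideanSpace ℝ (Fin 3)))
    (hν : ∀ f : EuclideanSpace ℝ (Fin 3) → ℂ, Measurable f →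
      (∃ B : ℝ, ∀ x, ‖f x‖ ≤ B) →
      ∫ x, f x ∂ν = ∫ s : ℝ, (∫ p : ℝ × ℝ, f (pT s (Φ p.1 p.2)) ∂lam) * ((ψ s : ℝ) : ℂ)) :
    ∀ ρ : ℝ, 0 < ρ →
      ‖mft ν (ρ • (EuclideanSpace.single (2 : Fin 3) 1))‖
        ≤ (C * ∫ s : ℝ, ψ s) * ρ ^ (-(β / 2)) := by
  intro ρ hρ
  have hΦm : Measurable fun p : ℝ × ℝ => Φ p.1 p.2 := by
    simp_rw [hΦ]
    exact (by fun_prop : Continuous _).measurable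
  have hν_char := hν _ (continuous_exp_inner (ρ • EuclideanSpace.single (2 : Fin 3) 1)).measurable
    ⟨1, fun x => (Complex.norm_exp_ofReal_mul_I _).le⟩
  rw [mft, hν_char, mul_right_comm]
  refine norm_integral_mul_ofReal_le (hψsm.continuous.integrable_of_hasCompactSupport hψcs)
    hψnn fun s => ?_
  simp_rw [inner_pT_smul_single_two]
  rw [norm_integral_exp_inner_sub_eq_norm_mft lam hΦm]
  refine norm_mft_le_rpow_of_le_norm hC.le (by positivity) hρ hdecay ?_
  rw [norm_smul, Real.norm_of_nonneg hρ.le]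
  exact le_mul_of_one_le_right hρ.le (one_le_norm_pNormal s)
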